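/- Let A be a finite connected subset of Z^2, gamma > 0, chi_1 a deterministic field on A and chi_2 a random field on A. Then the conditional expectation satisfies E[ R_{A,chi_1+chi_2}(u,v) ] <= R_{A,chi_1}(u,v) * max over nearest-neighbor pairs (u',v') in A of E[ exp(-gamma(chi_{2,u'} + chi_{2,v'})) ], assuming the expectations on the right are finite. -/

import Mathlib

/-!
Fix a unit flow `θ` from `u` to `v`. Edge resistances of `A_{χ₁+χ₂}` factor as those of `A_{χ₁}`
times `exp (-γ (χ₂ u' + χ₂ v'))`, so the energy of `θ` in `A_{χ₁+χ₂ ω}` bounds its effective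
resistance for every `ω`. The expectation of that energy is linear in the edge factors, hence at
most `M` times the energy of `θ` in `A_{χ₁}`, where `M` is the largest expected factor over the
edges `θ` uses. Taking the infimum over `θ` gives the bound.
-/

open Finset MeasureTheory
open scoped ProbabilityTheory

/-- Nearest-neighbor adjacency on `ℤ²`. -/
def nbr (u v : ℤ × ℤ) : Prop := |u.1 - v.1| + |u.2 - v.2| = 1

instance : DecidableRel nbr := fun u v => by unfold nbr; infer_instance

/-- Energy of a flow on the vertex set `A` (each unoriented edge counted once). -/
noncomputable def flowEnergy (A : Finset (ℤ × ℤ)) (r : ℤ × ℤ → ℤ × ℤ → ℝ)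
    (θ : ℤ × ℤ → ℤ × ℤ → ℝ) : ℝ :=
  (1 / 2) * ∑ x ∈ A, ∑ y ∈ A, r x y * (θ x y) ^ 2

/-- `θ` is a unit flow from `u` to `v` in the nearest-neighbor network on `A ⊆ ℤ²`. -/
def IsUnitFlow (A : Finset (ℤ × ℤ)) (u v : ℤ × ℤ) (θ : ℤ × ℤ → ℤ × ℤ → ℝ) : Prop :=
  (∀ x y, θ x y = -θ y x) ∧
  (∀ x y, ¬ (x ∈ A ∧ y ∈ A ∧ nbr x y) → θ x y = 0) ∧
  (∀ x ∈ A, x ≠ u → x ≠ v → ∑ y ∈ A, θ x y = 0) ∧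
  (∑ y ∈ A, θ u y = 1)

/-- The effective resistance between `u, v` in the network `A_χ` where the edge `(x, y)` has
resistance `exp (-γ (χ x + χ y))`. -/
noncomputable def effResField (γ : ℝ) (A : Finset (ℤ × ℤ)) (χ : ℤ × ℤ → ℝ)
    (u v : ℤ × ℤ) : ℝ :=
  sInf { E : ℝ | ∃ θ : ℤ × ℤ → ℤ × ℤ → ℝ, IsUnitFlow A u v θ ∧
    E = flowEnergy A (fun x y => Real.exp (-(γ * (χ x + χ y)))) θ }

noncomputable def fieldRes (γ : ℝ) (χ : ℤ × ℤ → ℝ) (x y : ℤ × ℤ) : ℝ :=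
  Real.exp (-(γ * (χ x + χ y)))

lemma fieldRes_nonneg (γ : ℝ) (χ : ℤ × ℤ → ℝ) (x y : ℤ × ℤ) : 0 ≤ fieldRes γ χ x y :=
  (Real.exp_pos _).le

lemma fieldRes_add (γ : ℝ) (χ₁ χ₂ : ℤ × ℤ → ℝ) (x y : ℤ × ℤ) :
    fieldRes γ (χ₁ + χ₂) x y = fieldRes γ χ₁ x y * fieldRes γ χ₂ x y := by
  simp only [fieldRes, Pi.add_apply, ← Real.exp_add]
  ring_nf

section FlowEnergy

variable {A : Finset (ℤ × ℤ)} {θ : ℤ × ℤ → ℤ × ℤ → ℝ}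

lemma flowEnergy_nonneg {r : ℤ × ℤ → ℤ × ℤ → ℝ} (hr : ∀ x y, 0 ≤ r x y) :
    0 ≤ flowEnergy A r θ :=
  mul_nonneg (by norm_num) <| sum_nonneg fun x _ => sum_nonneg fun y _ =>
    mul_nonneg (hr x y) (sq_nonneg _)

lemma flowEnergy_mono {r r' : ℤ × ℤ → ℤ × ℤ → ℝ}
    (h : ∀ x ∈ A, ∀ y ∈ A, θ x y ≠ 0 → r x y ≤ r' x y) :
    flowEnergy A r θ ≤ flowEnergy A r' θ := by
  refine mul_le_mul_of_nonneg_left (sum_le_sum fun x hx => sum_le_sum fun y hy => ?_) (by norm_num)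
  by_cases hθ : θ x y = 0
  · simp [hθ]
  · exact mul_le_mul_of_nonneg_right (h x hx y hy hθ) (sq_nonneg _)

lemma flowEnergy_mul_const (r : ℤ × ℤ → ℤ × ℤ → ℝ) (M : ℝ) :
    flowEnergy A (fun x y => r x y * M) θ = flowEnergy A r θ * M := by
  simp only [flowEnergy, mul_assoc, sum_mul]
  congr 1
  refine sum_congr rfl fun x _ => sum_congr rfl fun y _ => ?_
  ring

variable {Ω : Type*} [MeasurableSpace Ω] {μ : Measure Ω} {R : Ω → ℤ × ℤ → ℤ × ℤ → ℝ}

lemma integrable_flowEnergy_term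
    (hR : ∀ x ∈ A, ∀ y ∈ A, θ x y ≠ 0 → Integrable (fun ω => R ω x y) μ)
    {x y : ℤ × ℤ} (hx : x ∈ A) (hy : y ∈ A) :
    Integrable (fun ω => R ω x y * θ x y ^ 2) μ := by
  by_cases hθ : θ x y = 0
  · simp [hθ]
  · exact (hR x hx y hy hθ).mul_const _

lemma integrable_flowEnergy
    (hR : ∀ x ∈ A, ∀ y ∈ A, θ x y ≠ 0 → Integrable (fun ω => R ω x y) μ) :
    Integrable (fun ω => flowEnergy A (R ω) θ) μ :=
  (integrable_finsetSum A fun _ hx => integrable_finsetSum A fun _ hy =>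
    integrable_flowEnergy_term hR hx hy).const_mul _

lemma integral_flowEnergy
    (hR : ∀ x ∈ A, ∀ y ∈ A, θ x y ≠ 0 → Integrable (fun ω => R ω x y) μ) :
    ∫ ω, flowEnergy A (R ω) θ ∂μ = flowEnergy A (fun x y => ∫ ω, R ω x y ∂μ) θ := by
  unfold flowEnergy
  rw [integral_const_mul, integral_finsetSum A fun _ hx =>
    integrable_finsetSum A fun _ hy => integrable_flowEnergy_term hR hx hy]
  congr 1
  refine sum_congr rfl fun x hx => ?_
  rw [integral_finsetSum A fun _ hy => integrable_flowEnergy_term hR hx hy]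
  exact sum_congr rfl fun y _ => integral_mul_const _ _

end FlowEnergy

lemma IsUnitFlow.mem_of_ne_zero {A : Finset (ℤ × ℤ)} {u v : ℤ × ℤ}
    {θ : ℤ × ℤ → ℤ × ℤ → ℝ} (hθ : IsUnitFlow A u v θ) {x y : ℤ × ℤ} (hxy : θ x y ≠ 0) :
    x ∈ A ∧ y ∈ A ∧ nbr x y := by
  by_contra h
  exact hxy (hθ.2.1 x y h)

section EffRes

variable {γ : ℝ} {A : Finset (ℤ × ℤ)} {χ : ℤ × ℤ → ℝ} {u v : ℤ × ℤ}

lemma effResField_nonneg : 0 ≤ effResField γ A χ u v := by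
  apply Real.sInf_nonneg
  rintro E ⟨θ, _, rfl⟩
  exact flowEnergy_nonneg (fieldRes_nonneg γ χ)

lemma effResField_le_flowEnergy {θ : ℤ × ℤ → ℤ × ℤ → ℝ} (hθ : IsUnitFlow A u v θ) :
    effResField γ A χ u v ≤ flowEnergy A (fieldRes γ χ) θ :=
  csInf_le ⟨0, fun _ ⟨_, _, hE⟩ => hE ▸ flowEnergy_nonneg (fieldRes_nonneg γ χ)⟩ ⟨θ, hθ, rfl⟩

lemma effResField_eq_zero_of_forall_not_isUnitFlow (h : ∀ θ, ¬ IsUnitFlow A u v θ) :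
    effResField γ A χ u v = 0 := by
  have hempty : { E : ℝ | ∃ θ, IsUnitFlow A u v θ ∧ E = flowEnergy A (fieldRes γ χ) θ } = ∅ :=
    Set.eq_empty_of_forall_notMem fun _ ⟨θ, hθ, _⟩ => h θ hθ
  rw [effResField, ← Real.sInf_empty]
  exact congrArg sInf hempty

lemma le_effResField_mul {a M : ℝ} (hM : 0 ≤ M) (hflow : ∃ θ, IsUnitFlow A u v θ)
    (h : ∀ θ, IsUnitFlow A u v θ → a ≤ flowEnergy A (fieldRes γ χ) θ * M) :
    a ≤ effResField γ A χ u v * M := by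
  obtain ⟨θ₀, hθ₀⟩ := hflow
  rw [effResField, mul_comm, ← smul_eq_mul, ← Real.sInf_smul_of_nonneg hM]
  refine le_csInf (Set.Nonempty.smul_set ⟨_, θ₀, hθ₀, rfl⟩) ?_
  rintro _ ⟨_, ⟨θ, hθ, rfl⟩, rfl⟩
  exact (h θ hθ).trans_eq (mul_comm _ _)

end EffRes

theorem integral_effRes_field_le_general {Ω : Type} [MeasureSpace Ω]
    [IsProbabilityMeasure (ℙ : Measure Ω)]
    (γ : ℝ)
    (A : Finset (ℤ × ℤ)) (χ₁ : ℤ × ℤ → ℝ) (χ₂ : Ω → ℤ × ℤ → ℝ)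
    (u v : ℤ × ℤ)
    (Ed : Finset ((ℤ × ℤ) × (ℤ × ℤ)))
    (hEd : Ed = (A ×ˢ A).filter fun e => nbr e.1 e.2)
    (hne : Ed.Nonempty)
    (hint : ∀ e ∈ Ed,
      Integrable (fun ω => Real.exp (-(γ * (χ₂ ω e.1 + χ₂ ω e.2)))) ℙ) :
    ∫ ω, effResField γ A (χ₁ + χ₂ ω) u v ∂ℙ ≤
      effResField γ A χ₁ u v *
        Ed.sup' hne (fun e => ∫ ω, Real.exp (-(γ * (χ₂ ω e.1 + χ₂ ω e.2))) ∂ℙ) := by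
  set M := Ed.sup' hne (fun e => ∫ ω, Real.exp (-(γ * (χ₂ ω e.1 + χ₂ ω e.2))) ∂ℙ)
  have hM : 0 ≤ M :=
    le_sup'_of_le _ hne.choose_spec <| integral_nonneg fun _ => (Real.exp_pos _).le
  by_cases hflow : ∃ θ, IsUnitFlow A u v θ
  swap
  -- with no unit flow both resistances are `sInf ∅ = 0`
  · simp [effResField_eq_zero_of_forall_not_isUnitFlow (not_exists.mp hflow)]
  refine le_effResField_mul hM hflow fun θ hθ => ?_
  have hEd_mem : ∀ x ∈ A, ∀ y ∈ A, θ x y ≠ 0 → (x, y) ∈ Ed := fun x _ y _ hxy => by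
    simpa [hEd, and_assoc] using hθ.mem_of_ne_zero hxy
  have hR : ∀ x ∈ A, ∀ y ∈ A, θ x y ≠ 0 →
      Integrable (fun ω => fieldRes γ χ₁ x y * fieldRes γ (χ₂ ω) x y) ℙ :=
    fun x hx y hy hxy => (hint _ (hEd_mem x hx y hy hxy)).const_mul _
  calc ∫ ω, effResField γ A (χ₁ + χ₂ ω) u v ∂ℙ
      ≤ ∫ ω, flowEnergy A (fun x y => fieldRes γ χ₁ x y * fieldRes γ (χ₂ ω) x y) θ ∂ℙ := by
        refine integral_mono_of_nonneg (.of_forall fun _ => effResField_nonneg)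
          (integrable_flowEnergy hR) (.of_forall fun ω => ?_)
        simpa only [← fieldRes_add] using effResField_le_flowEnergy hθ
    _ = flowEnergy A (fun x y => fieldRes γ χ₁ x y * ∫ ω, fieldRes γ (χ₂ ω) x y ∂ℙ) θ := by
        simp only [integral_flowEnergy hR, integral_const_mul]
    _ ≤ flowEnergy A (fun x y => fieldRes γ χ₁ x y * M) θ :=
        flowEnergy_mono fun x hx y hy hxy => mul_le_mul_of_nonneg_left
          (le_sup' (fun e => ∫ ω, fieldRes γ (χ₂ ω) e.1 e.2 ∂ℙ) (hEd_mem x hx y hy hxy))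
          (fieldRes_nonneg γ χ₁ x y)
    _ = flowEnergy A (fieldRes γ χ₁) θ * M := flowEnergy_mul_const _ M

/-- Lemma 4.2(b): for a deterministic field `χ₁` and a random field `χ₂` on a finite connected
`A ⊆ ℤ²`,
`E[R_{A, χ₁+χ₂}(u,v)] ≤ R_{A, χ₁}(u,v) * max_{(u',v') n.n. in A} E[exp (-γ (χ₂ u' + χ₂ v'))]`,
the expectations on the right being finite (integrable). -/
theorem integral_effRes_field_le {Ω : Type} [MeasureSpace Ω]
    [IsProbabilityMeasure (ℙ : Measure Ω)]
    (γ : ℝ) (hγ : 0 < γ)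
    (A : Finset (ℤ × ℤ)) (χ₁ : ℤ × ℤ → ℝ) (χ₂ : Ω → ℤ × ℤ → ℝ)
    (hconn : ∀ x ∈ A, ∀ y ∈ A, ∃ p : List (ℤ × ℤ),
      p ≠ [] ∧ p.head? = some x ∧ p.getLast? = some y ∧
      p.Chain' nbr ∧ ∀ z ∈ p, z ∈ A)
    (u v : ℤ × ℤ) (hu : u ∈ A) (hv : v ∈ A)
    (Ed : Finset ((ℤ × ℤ) × (ℤ × ℤ)))
    (hEd : Ed = (A ×ˢ A).filter fun e => nbr e.1 e.2)
    (hne : Ed.Nonempty)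
    (hint : ∀ e ∈ Ed,
      Integrable (fun ω => Real.exp (-(γ * (χ₂ ω e.1 + χ₂ ω e.2)))) ℙ) :
    ∫ ω, effResField γ A (χ₁ + χ₂ ω) u v ∂ℙ ≤
      effResField γ A χ₁ u v *
        Ed.sup' hne (fun e => ∫ ω, Real.exp (-(γ * (χ₂ ω e.1 + χ₂ ω e.2))) ∂ℙ) :=
  integral_effRes_field_le_general γ A χ₁ χ₂ u v Ed hEd hne hint
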